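/- arXiv:2404.17185 — 6 statements merged into one kernel-verified Lean document; each statement's English description precedes it below -/
import Mathlib

section
/- Let $K$ be a number field, $r \geq 1$, and let $b, d, f \in K$ and $a_i, c_i, e_i \in K$ ($1 \leq i \leq r$) all be nonzero. Then there exist a finite extension field $L$ of $K$ and a finite set $S$ of finite places of $L$ such that $b, d, f$ and all $a_i, c_i, e_i$ are $S$-units of $L$, and the set $E$ of triples $(\alpha, \beta, \gamma)$ of $S$-units of $L$ with the property that for every finite place $v$ of $L$ outside $S$ and every $i \in \{1,\dots,r\}$, at least one of the three elements $c_i(\alpha - b) - a_i(\beta - d)$, $e_i(\beta - d) - c_i(\gamma - f)$, $e_i(\alpha - b) - a_i(\gamma - f)$ has $v$-adic valuation $0$ (is a $v$-adic unit), is Zariski dense in affine 3-space: the only polynomial in three variables over $L$ vanishing at every element of $E$ is the zero polynomial. -/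
open NumberField IsDedekindDomain

/-- A witness of potential density for the complement in `ℙ³` of the four coordinate hyperplanes
together with `r` concurrent lines through `p = [b : d : f : 1]` with directions
`[aᵢ : cᵢ : eᵢ : 0]`: a finite extension `L` of `K` and a finite set `S` of finite places of `L`
making `b, d, f, aᵢ, cᵢ, eᵢ` all `S`-units, such that the set `E` of triples of `S`-units
`(α, β, γ)` for which, at every finite place `v ∉ S` and every `i`, at least one of the three
minors `cᵢ(α-b) - aᵢ(β-d)`, `eᵢ(β-d) - cᵢ(γ-f)`, `eᵢ(α-b) - aᵢ(γ-f)` is a `v`-adic unit, is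
Zariski dense in affine 3-space over `L`. -/
structure ConcurrentLinesDensityWitness
    (K : Type*) [Field K] [NumberField K]
    (r : ℕ) (b d f : K) (a c e : Fin r → K) where
  /-- the finite extension field -/
  L : Type
  [fieldL : Field L]
  [numberFieldL : NumberField L]
  [algebraKL : Algebra K L]
  finiteDim : FiniteDimensional K L
  /-- the finite set of finite places of `L` -/
  S : Finset (HeightOneSpectrum (𝓞 L))
  unit_b : ∀ v : HeightOneSpectrum (𝓞 L), v ∉ S → v.valuation L (algebraMap K L b) = 1
  unit_d : ∀ v : HeightOneSpectrum (𝓞 L), v ∉ S → v.valuation L (algebraMap K L d) = 1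
  unit_f : ∀ v : HeightOneSpectrum (𝓞 L), v ∉ S → v.valuation L (algebraMap K L f) = 1
  unit_a : ∀ i, ∀ v : HeightOneSpectrum (𝓞 L), v ∉ S → v.valuation L (algebraMap K L (a i)) = 1
  unit_c : ∀ i, ∀ v : HeightOneSpectrum (𝓞 L), v ∉ S → v.valuation L (algebraMap K L (c i)) = 1
  unit_e : ∀ i, ∀ v : HeightOneSpectrum (𝓞 L), v ∉ S → v.valuation L (algebraMap K L (e i)) = 1
  /-- Zariski density of the set `E`: any polynomial in three variables over `L` vanishing on
  every triple of `S`-units satisfying the minor condition at all `v ∉ S` is zero. -/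
  dense : ∀ p : MvPolynomial (Fin 3) L,
    (∀ x : Fin 3 → L,
      (∀ j, ∀ v : HeightOneSpectrum (𝓞 L), v ∉ S → v.valuation L (x j) = 1) →
      (∀ v : HeightOneSpectrum (𝓞 L), v ∉ S → ∀ i : Fin r,
        v.valuation L (algebraMap K L (c i) * (x 0 - algebraMap K L b) -
            algebraMap K L (a i) * (x 1 - algebraMap K L d)) = 1 ∨
        v.valuation L (algebraMap K L (e i) * (x 1 - algebraMap K L d) -
            algebraMap K L (c i) * (x 2 - algebraMap K L f)) = 1 ∨
        v.valuation L (algebraMap K L (e i) * (x 0 - algebraMap K L b) -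
            algebraMap K L (a i) * (x 2 - algebraMap K L f)) = 1) →
      MvPolynomial.eval x p = 0) →
    p = 0

section AuxiliaryLemmas


/-!
Take for `L` a copy of `K` and for `S` the places at which one of `2, b, d, f, aᵢ, cᵢ, eᵢ` is
not a unit. At the point `(b 2ᵐ, d 2ⁿ, f 2ᵏ)` the first and third minors are
`cᵢb(2ᵐ-1) - aᵢd(2ⁿ-1)` and `eᵢb(2ᵐ-1) - aᵢf(2ᵏ-1)`. For coprime `m, n` the integers `2ᵐ-1` and
`2ⁿ-1` are coprime, so `2ᵐ-1` is a unit at every place where the first minor is not. If the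
first minors are nonzero, these places form a finite set `W`, and when `k` is a multiple of
`∏_{v ∈ W} (N v - 1)`, Fermat's little theorem in the residue fields makes every place of `W`
divide `2ᵏ-1`, so the third minor is a unit there. Hence for each `m ≥ 1`, infinitely many `n`,
and for each of them infinitely many `k`, give points of `E`; a polynomial vanishing on such a
nested family of infinite sets is zero.
-/

theorem two_pow_injective {R : Type*} [Semiring R] [CharZero R] :
    Function.Injective fun k : ℕ => (2 : R) ^ k := by
  intro j k h
  exact Nat.pow_right_injective le_rfl (by simp only at h ⊢; exact_mod_cast h)

theorem mul_two_pow_injective {R : Type*} [Semiring R] [IsLeftCancelMulZero R] [CharZero R]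
    {u : R} (hu : u ≠ 0) : Function.Injective fun k : ℕ => u * 2 ^ k :=
  fun _ _ h => two_pow_injective (mul_left_cancel₀ hu h)

theorem isCoprime_two_pow_sub_one {R : Type*} [CommRing R] {m n : ℕ} (h : m.Coprime n) :
    IsCoprime ((2 : R) ^ m - 1) ((2 : R) ^ n - 1) := by
  have hN : Nat.Coprime (2 ^ m - 1) (2 ^ n - 1) := by
    rw [Nat.Coprime, Nat.pow_sub_one_gcd_pow_sub_one, h.gcd_eq_one, pow_one]
  have hZ := Nat.isCoprime_iff_coprime.mpr hN
  rw [Nat.cast_sub Nat.one_le_two_pow, Nat.cast_sub Nat.one_le_two_pow] at hZ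
  simpa using hZ.map (Int.castRingHom R)

theorem Nat.infinite_setOf_coprime {m : ℕ} (hm : m ≠ 0) : {n : ℕ | n.Coprime m}.Infinite :=
  Set.infinite_of_injective_forall_mem (f := fun j => 1 + j * m)
    (fun _ _ h => by simpa [hm] using h)
    fun j => (Nat.coprime_add_mul_right_left 1 m j).2 (Nat.coprime_one_left m)

theorem Valuation.map_sub_eq_one_or_map_sub_eq_one {F Γ₀ : Type*} [CommRing F]
    [LinearOrderedCommMonoidWithZero Γ₀] (v : Valuation F Γ₀) {A B C D x y z : F}
    (hA : v A = 1) (hB : v B = 1) (hC : v C = 1) (hD : v D = 1)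
    (hx : v x ≤ 1) (hy : v y ≤ 1) (hxy : ¬(v x < 1 ∧ v y < 1)) (hz : v z < 1) :
    v (A * x - B * y) = 1 ∨ v (C * x - D * z) = 1 := by
  by_cases h : v (A * x - B * y) = 1
  · exact Or.inl h
  have hlt : v (A * x - B * y) < 1 := by
    refine lt_of_le_of_ne ((v.map_sub _ _).trans (max_le ?_ ?_)) h <;> simpa [hA, hB]
  have hx1 : v x = 1 := by
    refine hx.eq_of_not_lt fun hx1 => hxy ⟨hx1, ?_⟩
    have : v (B * y) < 1 := by
      rw [show B * y = A * x - (A * x - B * y) by ring]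
      exact (v.map_sub _ _).trans_lt (max_lt (by simpa [hA]) hlt)
    simpa [hB] using this
  right
  rw [v.map_sub_eq_of_lt_left] <;> simp [hC, hD, hx1, hz]

namespace MvPolynomial

theorem eval_aeval_update_C_X {σ R : Type*} [CommRing R] [DecidableEq σ]
    (p : MvPolynomial σ R) (x : σ → R) (i : σ) (t : R) :
    (aeval (Function.update (Polynomial.C ∘ x) i Polynomial.X) p).eval t =
      eval (Function.update x i t) p := by
  induction p using MvPolynomial.induction_on with
  | C a => simp
  | add p q hp hq => simp [hp, hq]
  | mul_X p j hp => by_cases hj : j = i <;> simp [hp, hj]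

theorem eval_update_eq_zero_of_infinite {σ R : Type*} [CommRing R] [IsDomain R]
    [DecidableEq σ] {p : MvPolynomial σ R} (x : σ → R) (i : σ) {T : Set R} (hT : T.Infinite)
    (h : ∀ t ∈ T, eval (Function.update x i t) p = 0) (t : R) :
    eval (Function.update x i t) p = 0 := by
  simp_rw [← eval_aeval_update_C_X] at h ⊢
  rw [Polynomial.eq_zero_of_infinite_isRoot _ (hT.mono h), Polynomial.eval_zero]

theorem eq_zero_of_eval_eq_zero_of_nested_infinite {R : Type*} [CommRing R] [IsDomain R]
    {p : MvPolynomial (Fin 3) R} {X : Set R} (hX : X.Infinite)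
    (h : ∀ x ∈ X, ∃ Y : Set R, Y.Infinite ∧ ∀ y ∈ Y, ∃ Z : Set R, Z.Infinite ∧
      ∀ z ∈ Z, eval ![x, y, z] p = 0) : p = 0 := by
  have upd : ∀ x y z t : R, Function.update ![x, y, z] 0 t = ![t, y, z] ∧
      Function.update ![x, y, z] 1 t = ![x, t, z] ∧
      Function.update ![x, y, z] 2 t = ![x, y, t] := by
    intros; refine ⟨?_, ?_, ?_⟩ <;> ext i <;> fin_cases i <;> rfl
  have hX' : ∀ x ∈ X, ∀ y z, eval ![x, y, z] p = 0 := by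
    intro x hx
    obtain ⟨Y, hY, hYZ⟩ := h x hx
    have hY' : ∀ y ∈ Y, ∀ z, eval ![x, y, z] p = 0 := by
      intro y hy z
      obtain ⟨Z, hZ, hZp⟩ := hYZ y hy
      simpa [upd] using eval_update_eq_zero_of_infinite ![x, y, 0] 2 hZ (by simpa [upd]) z
    intro y z
    simpa [upd] using eval_update_eq_zero_of_infinite ![x, 0, z] 1 hY
      (fun y hy => by simpa [upd] using hY' y hy z) y
  have : Infinite R := Set.infinite_univ_iff.mp (hX.mono (Set.subset_univ _))
  refine funext fun w => ?_
  have hw : w = ![w 0, w 1, w 2] := by ext i; fin_cases i <;> rfl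
  rw [map_zero, hw]
  simpa [upd] using eval_update_eq_zero_of_infinite ![0, w 1, w 2] 0 hX
    (fun x hx => by simpa [upd] using hX' x hx (w 1) (w 2)) (w 0)

end MvPolynomial

namespace IsDedekindDomain.HeightOneSpectrum

section FractionField

variable {R : Type*} [CommRing R] [IsDedekindDomain R]
  {K : Type*} [Field K] [Algebra R K] [IsFractionRing R K]

def IsSUnit (S : Finset (HeightOneSpectrum R)) (x : K) : Prop :=
  ∀ v ∉ S, v.valuation K x = 1

theorem IsSUnit.mul {S : Finset (HeightOneSpectrum R)} {x y : K} (hx : IsSUnit S x)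
    (hy : IsSUnit S y) : IsSUnit S (x * y) :=
  fun v hv => by rw [map_mul, hx v hv, hy v hv, one_mul]

theorem IsSUnit.pow {S : Finset (HeightOneSpectrum R)} {x : K} (hx : IsSUnit S x) (n : ℕ) :
    IsSUnit S (x ^ n) :=
  fun v hv => by rw [map_pow, hx v hv, one_pow]

theorem finite_setOf_valuation_ne_one {x : K} (hx : x ≠ 0) :
    {v : HeightOneSpectrum R | v.valuation K x ≠ 1}.Finite := by
  refine ((Support.finite R x).union (Support.finite R x⁻¹)).subset fun v hv => ?_
  rcases hv.lt_or_gt with h | h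
  · right
    show 1 < v.valuation K x⁻¹
    rwa [map_inv₀, one_lt_inv₀ ((Valuation.pos_iff _).2 hx)]
  · exact Or.inl h

theorem exists_forall_isSUnit {T : Set K} (hT : T.Finite) (h0 : ∀ x ∈ T, x ≠ 0) :
    ∃ S : Finset (HeightOneSpectrum R), ∀ x ∈ T, IsSUnit S x := by
  have hfin := hT.biUnion fun x hx => finite_setOf_valuation_ne_one (R := R) (h0 x hx)
  exact ⟨hfin.toFinset, fun x hx v hv => by_contra fun h =>
    hv (hfin.mem_toFinset.mpr (Set.mem_biUnion hx h))⟩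

end FractionField

variable {R : Type*} [CommRing R] [IsDedekindDomain R] [Module.Free ℤ R] [Module.Finite ℤ R]

theorem pow_absNorm_sub_one_sub_one_mem (v : HeightOneSpectrum R) {x : R}
    (hx : x ∉ v.asIdeal) : x ^ (Ideal.absNorm v.asIdeal - 1) - 1 ∈ v.asIdeal := by
  have : Finite (R ⧸ v.asIdeal) := v.asIdeal.finiteQuotientOfFreeOfNeBot v.ne_bot
  let := Ideal.Quotient.field v.asIdeal
  let u : (R ⧸ v.asIdeal)ˣ := Units.mk0 (Ideal.Quotient.mk _ x) (by
    rwa [Ne, Ideal.Quotient.eq_zero_iff_mem])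
  have hu : u ^ (Ideal.absNorm v.asIdeal - 1) = 1 := by
    rw [Ideal.absNorm_apply, Submodule.cardQuot_apply, ← Nat.card_units]
    exact pow_card_eq_one'
  rw [← Ideal.Quotient.eq_zero_iff_mem, map_sub, map_pow, map_one, sub_eq_zero]
  simpa [u, Units.ext_iff] using hu

theorem exists_pos_forall_pow_mul_sub_one_mem (W : Finset (HeightOneSpectrum R)) :
    ∃ N > 0, ∀ v ∈ W, ∀ x ∉ v.asIdeal, ∀ t : ℕ, x ^ (N * t) - 1 ∈ v.asIdeal := by
  refine ⟨∏ v ∈ W, (Ideal.absNorm v.asIdeal - 1), Finset.prod_pos fun v _ =>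
    Nat.sub_pos_of_lt (NumberField.HeightOneSpectrum.one_lt_absNorm v), fun v hv x hx t => ?_⟩
  obtain ⟨s, hs⟩ := (Finset.dvd_prod_of_mem _ hv).mul_right t
  rw [hs, pow_mul]
  exact Ideal.mem_of_dvd _ (sub_one_dvd_pow_sub_one _ s) (pow_absNorm_sub_one_sub_one_mem v hx)

end IsDedekindDomain.HeightOneSpectrum

open IsDedekindDomain.HeightOneSpectrum

instance NumberField.instSmall (K : Type*) [Field K] [NumberField K] : Small.{0} K :=
  Small.mk' (Module.finBasis ℚ K).equivFun.toEquiv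

instance NumberField.instShrink (K : Type*) [Field K] [NumberField K] [Small.{0} K] :
    NumberField (Shrink.{0} K) :=
  NumberField.of_ringEquiv _ _ (Shrink.ringEquiv K).symm

section ConcurrentLines

variable {L : Type*} [Field L] [NumberField L] {S : Finset (HeightOneSpectrum (𝓞 L))} {r : ℕ}
  {b d f : L} {a c e : Fin r → L}

variable (S b d f a c e) in
def IsSIntegralPoint (x : Fin 3 → L) : Prop :=
  (∀ j, IsSUnit S (x j)) ∧ ∀ v ∉ S, ∀ i : Fin r,
    v.valuation L (c i * (x 0 - b) - a i * (x 1 - d)) = 1 ∨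
    v.valuation L (e i * (x 1 - d) - c i * (x 2 - f)) = 1 ∨
    v.valuation L (e i * (x 0 - b) - a i * (x 2 - f)) = 1

theorem valuation_two_pow_sub_one_lt_one_iff (v : HeightOneSpectrum (𝓞 L)) (k : ℕ) :
    v.valuation L (2 ^ k - 1) < 1 ↔ (2 : 𝓞 L) ^ k - 1 ∈ v.asIdeal := by
  rw [← valuation_lt_one_iff_mem (K := L)]
  push_cast
  rfl

theorem isSIntegralPoint_two_pow {m n k : ℕ} (hmn : m.Coprime n) (h2 : IsSUnit S (2 : L))
    (hb : IsSUnit S b) (hd : IsSUnit S d) (hf : IsSUnit S f) (ha : ∀ i, IsSUnit S (a i))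
    (hc : ∀ i, IsSUnit S (c i)) (he : ∀ i, IsSUnit S (e i))
    (hk : ∀ v ∉ S, ∀ i, v.valuation L (c i * b * (2 ^ m - 1) - a i * d * (2 ^ n - 1)) ≠ 1 →
      v.valuation L (2 ^ k - 1) < 1) :
    IsSIntegralPoint S b d f a c e ![b * 2 ^ m, d * 2 ^ n, f * 2 ^ k] := by
  refine ⟨fun j => ?_, fun v hv i => ?_⟩
  · fin_cases j
    exacts [hb.mul (h2.pow m), hd.mul (h2.pow n), hf.mul (h2.pow k)]
  have hle : ∀ j : ℕ, v.valuation L (2 ^ j - 1) ≤ 1 := fun j => by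
    exact_mod_cast v.valuation_le_one (K := L) ((2 : 𝓞 L) ^ j - 1)
  have hcop : ¬(v.valuation L (2 ^ m - 1) < 1 ∧ v.valuation L (2 ^ n - 1) < 1) := by
    simp only [valuation_two_pow_sub_one_lt_one_iff]
    rintro ⟨hm, hn⟩
    obtain ⟨u, w, huw⟩ := isCoprime_two_pow_sub_one (R := 𝓞 L) hmn
    exact v.isPrime.ne_top ((Ideal.eq_top_iff_one _).2 (huw ▸ Ideal.add_mem _
      (Ideal.mul_mem_left _ u hm) (Ideal.mul_mem_left _ w hn)))
  simp only [Matrix.cons_val_zero, Matrix.cons_val_one, Matrix.cons_val_two, Matrix.head_cons,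
    Matrix.tail_cons, ← mul_sub_one, ← mul_assoc]
  by_cases h1 : v.valuation L (c i * b * (2 ^ m - 1) - a i * d * (2 ^ n - 1)) = 1
  · exact Or.inl h1
  refine Or.inr (Or.inr ((Valuation.map_sub_eq_one_or_map_sub_eq_one _ ?_ ?_ ?_ ?_ (hle m)
    (hle n) hcop (hk v hv i h1)).resolve_left h1)) <;>
  simp [hb v hv, hd v hv, hf v hv, ha i v hv, hc i v hv, he i v hv]

theorem exists_forall_isSIntegralPoint_two_pow {m n : ℕ} (hmn : m.Coprime n)
    (hne : ∀ i, c i * b * (2 ^ m - 1) - a i * d * (2 ^ n - 1) ≠ 0) (h2 : IsSUnit S (2 : L))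
    (hb : IsSUnit S b) (hd : IsSUnit S d) (hf : IsSUnit S f) (ha : ∀ i, IsSUnit S (a i))
    (hc : ∀ i, IsSUnit S (c i)) (he : ∀ i, IsSUnit S (e i)) :
    ∃ N > 0, ∀ t : ℕ,
      IsSIntegralPoint S b d f a c e ![b * 2 ^ m, d * 2 ^ n, f * 2 ^ (N * t)] := by
  have hW := Set.finite_iUnion fun i => finite_setOf_valuation_ne_one (R := 𝓞 L) (hne i)
  obtain ⟨N, hN, hNW⟩ := exists_pos_forall_pow_mul_sub_one_mem hW.toFinset
  refine ⟨N, hN, fun t => isSIntegralPoint_two_pow hmn h2 hb hd hf ha hc he fun v hv i hi => ?_⟩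
  have h2v : (2 : 𝓞 L) ∉ v.asIdeal := by
    rw [← valuation_lt_one_iff_mem (K := L)]
    exact not_lt.2 (h2 v hv).ge
  rw [valuation_two_pow_sub_one_lt_one_iff]
  exact hNW v (hW.mem_toFinset.mpr (Set.mem_iUnion.mpr ⟨i, hi⟩)) 2 h2v t

theorem infinite_setOf_coprime_and_forall_ne {m : ℕ} (hm : m ≠ 0) (hd : d ≠ 0)
    (ha : ∀ i, a i ≠ 0) :
    {n : ℕ | m.Coprime n ∧ ∀ i, c i * b * (2 ^ m - 1) - a i * d * (2 ^ n - 1) ≠ 0}.Infinite := by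
  have hbad (i) : {n : ℕ | c i * b * (2 ^ m - 1) - a i * d * (2 ^ n - 1) = 0}.Subsingleton := by
    intro n₁ h₁ n₂ h₂
    apply two_pow_injective (R := L)
    simpa [mul_right_inj' (mul_ne_zero (ha i) hd)] using h₁.trans h₂.symm
  convert (Nat.infinite_setOf_coprime hm).sdiff (Set.finite_iUnion fun i => (hbad i).finite)
    using 1
  ext n
  simp [Nat.coprime_comm]

theorem eq_zero_of_forall_isSIntegralPoint_eval_eq_zero (hb₀ : b ≠ 0) (hd₀ : d ≠ 0)
    (hf₀ : f ≠ 0) (ha₀ : ∀ i, a i ≠ 0) (h2 : IsSUnit S (2 : L)) (hb : IsSUnit S b)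
    (hd : IsSUnit S d) (hf : IsSUnit S f) (ha : ∀ i, IsSUnit S (a i))
    (hc : ∀ i, IsSUnit S (c i)) (he : ∀ i, IsSUnit S (e i)) {p : MvPolynomial (Fin 3) L}
    (hp : ∀ x, IsSIntegralPoint S b d f a c e x → MvPolynomial.eval x p = 0) : p = 0 := by
  refine MvPolynomial.eq_zero_of_eval_eq_zero_of_nested_infinite
    (Set.infinite_range_of_injective ((mul_two_pow_injective hb₀).comp Nat.succ_injective)) ?_
  rintro _ ⟨m, rfl⟩
  refine ⟨_, (infinite_setOf_coprime_and_forall_ne (c := c) (b := b) m.succ_ne_zero hd₀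
    ha₀).image (mul_two_pow_injective hd₀).injOn, ?_⟩
  rintro _ ⟨n, ⟨hmn, hne⟩, rfl⟩
  obtain ⟨N, hN, hpt⟩ := exists_forall_isSIntegralPoint_two_pow hmn hne h2 hb hd hf ha hc he
  exact ⟨_, Set.infinite_range_of_injective
    ((mul_two_pow_injective hf₀).comp (mul_right_injective₀ hN.ne')),
    by rintro _ ⟨t, rfl⟩; exact hp _ (hpt t)⟩

end ConcurrentLines

theorem concurrent_lines_potential_density_general
    (K : Type*) [Field K] [NumberField K]
    (r : ℕ) (b d f : K) (a c e : Fin r → K)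
    (hb : b ≠ 0) (hd : d ≠ 0) (hf : f ≠ 0)
    (ha : ∀ i, a i ≠ 0) (hc : ∀ i, c i ≠ 0) (he : ∀ i, e i ≠ 0) :
    Nonempty (ConcurrentLinesDensityWitness K r b d f a c e) := by
  -- the witness structure asks for `L : Type`, so `K` is moved to universe `0`
  let L := Shrink.{0} K
  let φ := algebraMap K L
  obtain ⟨S, hS⟩ := exists_forall_isSUnit (R := 𝓞 L)
    (T := {2, φ b, φ d, φ f} ∪ Set.range (φ ∘ a) ∪ Set.range (φ ∘ c) ∪ Set.range (φ ∘ e))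
    (Set.toFinite _) (by simp [or_imp, forall_and, φ, hb, hd, hf, ha, hc, he])
  have ha' (i) : IsSUnit S (φ (a i)) := hS _ (by simp)
  have hc' (i) : IsSUnit S (φ (c i)) := hS _ (by simp)
  have he' (i) : IsSUnit S (φ (e i)) := hS _ (by simp)
  have hb' : IsSUnit S (φ b) := hS _ (by simp)
  have hd' : IsSUnit S (φ d) := hS _ (by simp)
  have hf' : IsSUnit S (φ f) := hS _ (by simp)
  exact ⟨⟨L, (Shrink.algEquiv K K).symm.toLinearEquiv.finiteDimensional, S, hb', hd', hf', ha',
    hc', he', fun p hp => eq_zero_of_forall_isSIntegralPoint_eval_eq_zero (by simpa [φ])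
      (by simpa [φ]) (by simpa [φ]) (by simpa [φ]) (hS 2 (by simp)) hb' hd' hf' ha' hc' he'
      fun x hx => hp x hx.1 hx.2⟩⟩

/-- (Theorem 1.2 of the paper, in explicit coordinates.)  Given `r ≥ 1` and
nonzero `b, d, f, aᵢ, cᵢ, eᵢ ∈ K`, there exist a finite extension `L` of `K` and a finite set
`S` of finite places of `L` as in `ConcurrentLinesDensityWitness`: all the given constants are
`S`-units and the corresponding set `E` of `S`-integral points is Zariski dense in `𝔸³`. -/
theorem concurrent_lines_potential_density
    (K : Type*) [Field K] [NumberField K]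
    (r : ℕ) (hr : 1 ≤ r) (b d f : K) (a c e : Fin r → K)
    (hb : b ≠ 0) (hd : d ≠ 0) (hf : f ≠ 0)
    (ha : ∀ i, a i ≠ 0) (hc : ∀ i, c i ≠ 0) (he : ∀ i, e i ≠ 0) :
    Nonempty (ConcurrentLinesDensityWitness K r b d f a c e) :=
  concurrent_lines_potential_density_general K r b d f a c e hb hd hf ha hc he
end AuxiliaryLemmas
end

section
/- Let $K$ be a number field with ring of integers $\mathcal{O}_K$, let $n \geq 0$, and let $\varphi : \mathcal{O}_K[X_0,\dots,X_n] \to K[X_0,\dots,X_n]$ be the ring homomorphism between multivariate polynomial rings induced by the inclusion $\mathcal{O}_K \to K$. For any two ideals $I, J$ of $K[X_0,\dots,X_n]$ there exists a nonzero $t \in \mathcal{O}_K$ such that for every $f$ in the preimage ideal $(I + J).\mathrm{comap}\,\varphi$, the product $t \cdot f$ lies in $I.\mathrm{comap}\,\varphi + J.\mathrm{comap}\,\varphi$. -/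
open NumberField

/-- Clearing denominators for a multivariate polynomial over a number field. -/
lemma exists_clear_denoms (K : Type*) [Field K] [NumberField K] {σ : Type*}
    (a : MvPolynomial σ K) :
    ∃ t : 𝓞 K, t ≠ 0 ∧ ∃ a' : MvPolynomial σ (𝓞 K),
      MvPolynomial.map (algebraMap (𝓞 K) K) a' = MvPolynomial.C ((algebraMap (𝓞 K) K) t) * a := by
  obtain ⟨b, hb⟩ := IsLocalization.exist_integer_multiples (nonZeroDivisors (𝓞 K))
    a.support a.coeff
  refine ⟨b, nonZeroDivisors.coe_ne_zero b, ?_⟩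
  choose c hc using fun m hm => hb m hm
  refine ⟨∑ m ∈ a.support.attach, MvPolynomial.monomial m.1 (c m.1 m.2), ?_⟩
  rw [map_sum]
  conv_rhs => rw [a.as_sum, Finset.mul_sum, ← Finset.sum_attach]
  refine Finset.sum_congr rfl fun m _ => ?_
  rw [MvPolynomial.map_monomial, hc m.1 m.2, MvPolynomial.C_mul_monomial]
  rfl

/-- For any two ideals `I, J` of `K[X₀,…,Xₙ]` over a number field `K`,
there is a nonzero `t ∈ 𝓞 K` such that `t` multiplies the preimage ideal
`(I + J) ∩ 𝓞 K[X₀,…,Xₙ]` into `(I ∩ 𝓞 K[X]) + (J ∩ 𝓞 K[X])`. -/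
theorem exists_nonzero_smul_comap_add_mem
    (K : Type*) [Field K] [NumberField K] (n : ℕ)
    (I J : Ideal (MvPolynomial (Fin (n + 1)) K)) :
    ∃ t : 𝓞 K, t ≠ 0 ∧
      ∀ f ∈ Ideal.comap (MvPolynomial.map (algebraMap (𝓞 K) K)) (I + J),
        MvPolynomial.C t * f ∈
          Ideal.comap (MvPolynomial.map (algebraMap (𝓞 K) K)) I +
            Ideal.comap (MvPolynomial.map (algebraMap (𝓞 K) K)) J := by
  classical
  set φ := MvPolynomial.map (σ := Fin (n+1)) (algebraMap (𝓞 K) K) with hφ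
  have hφinj : Function.Injective φ :=
    MvPolynomial.map_injective _ (IsFractionRing.injective (𝓞 K) K)
  -- the comap ideal is finitely generated
  obtain ⟨s, hs⟩ := (IsNoetherian.noetherian (Ideal.comap φ (I + J)))
  -- for each generator, find a t clearing it
  have key : ∀ g ∈ s, ∃ t : 𝓞 K, t ≠ 0 ∧
      MvPolynomial.C t * g ∈ Ideal.comap φ I + Ideal.comap φ J := by
    intro g hg
    have hgmem : φ g ∈ I + J := by
      rw [← Ideal.mem_comap, ← hs]; exact Ideal.subset_span hg
    obtain ⟨p, hp, q, hq, hpq⟩ := Submodule.mem_sup.mp hgmem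
    obtain ⟨t1, ht1, p', hp'⟩ := exists_clear_denoms K p
    obtain ⟨t2, ht2, q', hq'⟩ := exists_clear_denoms K q
    refine ⟨t1 * t2, mul_ne_zero ht1 ht2, ?_⟩
    refine Submodule.mem_sup.mpr ⟨MvPolynomial.C t2 * p', ?_, MvPolynomial.C t1 * q', ?_, ?_⟩
    · refine Ideal.mem_comap.mpr ?_
      rw [map_mul, hp', MvPolynomial.map_C]
      exact I.mul_mem_left _ (I.mul_mem_left _ hp)
    · refine Ideal.mem_comap.mpr ?_
      rw [map_mul, hq', MvPolynomial.map_C]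
      exact J.mul_mem_left _ (J.mul_mem_left _ hq)
    · apply hφinj
      rw [map_add, map_mul, map_mul, hp', hq', map_mul, MvPolynomial.map_C,
        MvPolynomial.map_C, MvPolynomial.map_C, map_mul, MvPolynomial.C_mul]
      ring_nf
      rw [← hpq]
      ring
  choose t ht0 htmem using key
  refine ⟨∏ g ∈ s.attach, t g.1 g.2, Finset.prod_ne_zero_iff.mpr fun g _ => ht0 g.1 g.2, ?_⟩
  intro f hf
  rw [← hs] at hf
  set P := Ideal.comap φ I + Ideal.comap φ J with hP
  induction hf using Submodule.span_induction with
  | mem g hg =>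
    obtain ⟨g', hg', rfl⟩ : ∃ h : g ∈ s, True := ⟨hg, trivial⟩
    have : (∏ x ∈ s.attach, t x.1 x.2) =
        t g g' * ∏ x ∈ s.attach.erase ⟨g, g'⟩, t x.1 x.2 := by
      rw [← Finset.mul_prod_erase _ _ (Finset.mem_attach s ⟨g, g'⟩)]
    rw [this, MvPolynomial.C_mul, mul_comm (MvPolynomial.C (t g g')), mul_assoc]
    exact P.mul_mem_left _ (htmem g g')
  | zero => simp
  | add x y _ _ hx hy => rw [mul_add]; exact P.add_mem hx hy
  | smul r x _ hx => rw [smul_eq_mul, mul_left_comm]; exact P.mul_mem_left _ hx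
end

section
/- Let $K$ be a number field with ring of integers $\mathcal{O}_K$, $n \geq 0$, and $I, J$ two ideals of $K[X_0,\dots,X_n]$. For each finite place $v$ of $K$, let $O_v \subseteq K$ be the localization of $\mathcal{O}_K$ at the corresponding maximal ideal, and let $\varphi_v : O_v[X_0,\dots,X_n] \to K[X_0,\dots,X_n]$ be the induced map of polynomial rings. Then for all but finitely many finite places $v$ of $K$, one has the equality of preimage ideals $(I + J).\mathrm{comap}\,\varphi_v = I.\mathrm{comap}\,\varphi_v + J.\mathrm{comap}\,\varphi_v$. -/
open NumberField IsDedekindDomain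

/-!
Write `A = 𝓞 K`. Since `K[X]` is the localization of `A[X]` at the nonzero constants and `A[X]`
is noetherian, a single nonzero constant `t` carries the finitely generated contraction
`(I + J) ∩ A[X]` into `(I ∩ A[X]) + (J ∩ A[X])`. The valuation ring `O_v` is the localization of
`A` at `v`, so `O_v[X]` is a localization of `A[X]`, and contracting an ideal of `K[X]` to `O_v[X]`
is the same as extending its contraction to `A[X]`. For `t ∉ v` the constant `t` is a unit of
`O_v[X]`, so the two contractions to `O_v[X]` agree.
-/

namespace IsLocalization

variable {B B' : Type*} [CommSemiring B] [CommSemiring B'] [Algebra B B']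

theorem comap_eq_map_comap_comp (M : Submonoid B) [IsLocalization M B'] {C : Type*} [Semiring C]
    (g : B' →+* C) (I : Ideal C) :
    I.comap g = (I.comap (g.comp (algebraMap B B'))).map (algebraMap B B') := by
  rw [← Ideal.comap_comap]
  exact (map_under M B' _).symm

variable (M : Submonoid B) [IsLocalization M B']

theorem map_le_map_of_forall_mul_mem {m : B} (hm : m ∈ M) {L N : Ideal B}
    (h : ∀ x ∈ L, m * x ∈ N) : L.map (algebraMap B B') ≤ N.map (algebraMap B B') := by
  refine Ideal.map_le_iff_le_comap.mpr fun x hx => ?_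
  rw [Ideal.mem_comap, ← Ideal.unit_mul_mem_iff_mem _ (map_units B' ⟨m, hm⟩), ← map_mul]
  exact Ideal.mem_map_of_mem _ (h x hx)

theorem exists_mem_forall_mul_mem_of_map_le {L N : Ideal B} (hL : L.FG)
    (h : L.map (algebraMap B B') ≤ N.map (algebraMap B B')) :
    ∃ m ∈ M, ∀ x ∈ L, m * x ∈ N := by
  induction L, hL using Submodule.fg_induction with
  | singleton x =>
    obtain ⟨m, hm, hmx⟩ := (algebraMap_mem_map_algebraMap_iff M B' N x).mp
      (h (Ideal.mem_map_of_mem _ (Ideal.mem_span_singleton_self x)))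
    refine ⟨m, hm, fun y hy => ?_⟩
    obtain ⟨a, rfl⟩ := Ideal.mem_span_singleton'.mp hy
    rw [mul_left_comm]
    exact N.mul_mem_left a hmx
  | sup L₁ L₂ _ _ ih₁ ih₂ =>
    rw [Ideal.map_sup, sup_le_iff] at h
    obtain ⟨m₁, hm₁, h₁⟩ := ih₁ h.1
    obtain ⟨m₂, hm₂, h₂⟩ := ih₂ h.2
    refine ⟨m₁ * m₂, M.mul_mem hm₁ hm₂, fun x hx => ?_⟩
    obtain ⟨y, hy, z, hz, rfl⟩ := Submodule.mem_sup.mp hx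
    rw [mul_add, mul_right_comm m₁ m₂ y, mul_assoc m₁ m₂ z]
    exact N.add_mem (N.mul_mem_right m₂ (h₁ y hy)) (N.mul_mem_left m₁ (h₂ z hz))

theorem exists_mem_forall_mul_mem_comap_sup [IsNoetherianRing B] (I J : Ideal B') :
    ∃ m ∈ M, ∀ x ∈ (I ⊔ J).comap (algebraMap B B'),
      m * x ∈ I.comap (algebraMap B B') ⊔ J.comap (algebraMap B B') := by
  refine exists_mem_forall_mul_mem_of_map_le (B' := B') M (IsNoetherian.noetherian _) ?_
  rw [Ideal.map_sup, map_under M B', map_under M B', map_under M B']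

theorem comap_sup_eq_sup_comap_of_forall_mul_mem {C : Type*} [Semiring C] (g : B' →+* C)
    {m : B} (hm : m ∈ M) (I J : Ideal C)
    (h : ∀ x ∈ (I ⊔ J).comap (g.comp (algebraMap B B')),
      m * x ∈ I.comap (g.comp (algebraMap B B')) ⊔ J.comap (g.comp (algebraMap B B'))) :
    (I ⊔ J).comap g = I.comap g ⊔ J.comap g := by
  rw [comap_eq_map_comap_comp M g, comap_eq_map_comap_comp M g I, comap_eq_map_comap_comp M g J,
    ← Ideal.map_sup]
  exact le_antisymm (map_le_map_of_forall_mul_mem M hm h) (Ideal.map_mono (Ideal.le_comap_sup _))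

end IsLocalization

attribute [local instance] MvPolynomial.algebraMvPolynomial

/-- For two ideals `I, J` of `K[X₀,…,Xₙ]` over a number field `K`, the set of
finite places `v` of `K` at which the preimage of `I + J` in `O_v[X₀,…,Xₙ]` differs from the sum
of the preimages of `I` and of `J` is finite.  Here the valuation ring `O_v ⊆ K` (the
localization of `𝓞 K` at the maximal ideal corresponding to `v`) is realized as the valuation
subring of the `v`-adic valuation. -/
theorem finite_setOf_comap_add_ne_add_comap
    (K : Type*) [Field K] [NumberField K] (n : ℕ)
    (I J : Ideal (MvPolynomial (Fin (n + 1)) K)) :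
    {v : HeightOneSpectrum (𝓞 K) |
      Ideal.comap (MvPolynomial.map ((v.valuation K).valuationSubring.subtype)) (I + J) ≠
        Ideal.comap (MvPolynomial.map ((v.valuation K).valuationSubring.subtype)) I +
          Ideal.comap (MvPolynomial.map ((v.valuation K).valuationSubring.subtype)) J}.Finite := by
  obtain ⟨_, ⟨t, ht, rfl⟩, hC⟩ := IsLocalization.exists_mem_forall_mul_mem_comap_sup
    ((nonZeroDivisors (𝓞 K)).map (MvPolynomial.C (σ := Fin (n + 1)))) I J
  refine (Ideal.finite_factors (by simpa using nonZeroDivisors.ne_zero ht :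
    Ideal.span {t} ≠ 0)).subset fun v hv => ?_
  rw [Set.mem_ofPred_eq, Ideal.dvd_span_singleton]
  by_contra htv
  apply hv
  rw [← HeightOneSpectrum.valuationSubringAtPrime_eq_valuationSubring]
  have hcomp : (MvPolynomial.map (HeightOneSpectrum.valuationSubringAtPrime K v).subtype).comp
      (algebraMap (MvPolynomial (Fin (n + 1)) (𝓞 K)) _) =
      algebraMap (MvPolynomial (Fin (n + 1)) (𝓞 K)) (MvPolynomial (Fin (n + 1)) K) := by
    ext <;> simp; rfl
  simp only [Submodule.add_eq_sup]
  refine IsLocalization.comap_sup_eq_sup_comap_of_forall_mul_mem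
    (v.asIdeal.primeCompl.map (MvPolynomial.C (σ := Fin (n + 1)))) _ ⟨t, htv, rfl⟩ I J ?_
  rw [hcomp]
  exact hC
end

section
/- Let $R$ be a commutative local ring with maximal ideal $\mathfrak{m}$ and residue field $k$, let $n \geq 1$, and let $x, y : \mathrm{Fin}(n+1) \to R$ be vectors such that at least one coordinate of $x$ and at least one coordinate of $y$ is a unit of $R$. Let $\bar{x}, \bar{y} : \mathrm{Fin}(n+1) \to k$ denote the coordinatewise reductions modulo $\mathfrak{m}$ (both are nonzero vectors). Then there exists $c \in k^\times$ with $\bar{y}_i = c \cdot \bar{x}_i$ for all $i$ (i.e., $\bar{x}$ and $\bar{y}$ define the same point of projective $n$-space over $k$) if and only if $x_i y_j - x_j y_i \in \mathfrak{m}$ for all $i, j$. -/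
section Field

variable {K ι : Type*} [Field K]

theorem exists_eq_mul_iff_minors_eq_zero {u v : ι → K} {i₀ : ι} (hu : u i₀ ≠ 0) :
    (∃ c : K, ∀ i, v i = c * u i) ↔ ∀ i j, u i * v j - u j * v i = 0 := by
  constructor
  · rintro ⟨c, hc⟩ i j
    rw [hc i, hc j]
    ring
  · intro h
    refine ⟨v i₀ / u i₀, fun i => ?_⟩
    rw [div_mul_eq_mul_div, eq_div_iff hu]
    linear_combination h i₀ i

theorem exists_unit_eq_mul_iff_minors_eq_zero {u v : ι → K} {i₀ j₀ : ι} (hu : u i₀ ≠ 0)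
    (hv : v j₀ ≠ 0) :
    (∃ c : Kˣ, ∀ i, v i = c * u i) ↔ ∀ i j, u i * v j - u j * v i = 0 := by
  rw [← exists_eq_mul_iff_minors_eq_zero hu]
  refine ⟨fun ⟨c, hc⟩ => ⟨c, hc⟩, fun ⟨c, hc⟩ => ⟨Units.mk0 c ?_, hc⟩⟩
  rintro rfl
  exact hv (by simpa using hc j₀)

end Field

theorem residue_proportional_iff_minors_mem_maximalIdeal_general
    (R : Type*) [CommRing R] [IsLocalRing R] (n : ℕ)
    (x y : Fin (n + 1) → R)
    (hx : ∃ i, IsUnit (x i)) (hy : ∃ i, IsUnit (y i)) :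
    (∃ c : (IsLocalRing.ResidueField R)ˣ,
        ∀ i, IsLocalRing.residue R (y i) = (c : IsLocalRing.ResidueField R) *
          IsLocalRing.residue R (x i)) ↔
      ∀ i j, x i * y j - x j * y i ∈ IsLocalRing.maximalIdeal R := by
  obtain ⟨i₀, hi₀⟩ := hx
  obtain ⟨j₀, hj₀⟩ := hy
  rw [exists_unit_eq_mul_iff_minors_eq_zero (u := fun i => IsLocalRing.residue R (x i))
    ((IsLocalRing.residue_ne_zero_iff_isUnit _).mpr hi₀)
    ((IsLocalRing.residue_ne_zero_iff_isUnit _).mpr hj₀)]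
  simp only [← IsLocalRing.residue_eq_zero_iff, map_sub, map_mul]

/-- Over a commutative local ring `R` with maximal ideal `𝔪` and residue
field `k`, two vectors `x y : Fin (n+1) → R`, each with at least one unit coordinate, have
coordinatewise reductions defining the same point of `ℙⁿ(k)` (i.e. differing by a unit scalar
`c ∈ kˣ`) if and only if all the `2 × 2` minors `xᵢ yⱼ - xⱼ yᵢ` lie in `𝔪`. -/
theorem residue_proportional_iff_minors_mem_maximalIdeal
    (R : Type*) [CommRing R] [IsLocalRing R] (n : ℕ) (hn : 1 ≤ n)
    (x y : Fin (n + 1) → R)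
    (hx : ∃ i, IsUnit (x i)) (hy : ∃ i, IsUnit (y i)) :
    (∃ c : (IsLocalRing.ResidueField R)ˣ,
        ∀ i, IsLocalRing.residue R (y i) = (c : IsLocalRing.ResidueField R) *
          IsLocalRing.residue R (x i)) ↔
      ∀ i j, x i * y j - x j * y i ∈ IsLocalRing.maximalIdeal R :=
  residue_proportional_iff_minors_mem_maximalIdeal_general R n x y hx hy
end

section
/- Let $R$ be a commutative ring, $n \geq 1$, and $a, b : \mathrm{Fin}(n+1) \to R$ vectors such that the ideal of $R$ generated by all the $2 \times 2$ minors $\{a_i b_j - a_j b_i : i, j\}$ is the unit ideal. Then for every unit $u \in R^\times$, the ideal of $R$ generated by $\{u \cdot a_i + b_i : i\}$ is the unit ideal. -/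
/-- If the ideal generated by all `2 × 2` minors `aᵢ bⱼ - aⱼ bᵢ` of two vectors
`a, b : Fin (n+1) → R` over a commutative ring is the unit ideal, then for every unit `u` the
ideal generated by the coordinates `u * aᵢ + bᵢ` is the unit ideal. -/
theorem span_unit_smul_add_eq_top_of_span_minors_eq_top
    (R : Type*) [CommRing R] (n : ℕ) (hn : 1 ≤ n) (a b : Fin (n + 1) → R)
    (h : Ideal.span {x : R | ∃ i j, x = a i * b j - a j * b i} = ⊤) (u : Rˣ) :
    Ideal.span (Set.range fun i => (u : R) * a i + b i) = ⊤ := by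
  by_contra hne
  obtain ⟨m, hm, hle⟩ := Ideal.exists_le_maximal _ hne
  have hmem : ∀ i, (u : R) * a i + b i ∈ m := fun i =>
    hle (Ideal.subset_span ⟨i, rfl⟩)
  have : Ideal.span {x : R | ∃ i j, x = a i * b j - a j * b i} ≤ m := by
    rw [Ideal.span_le]
    rintro x ⟨i, j, rfl⟩
    have : a i * b j - a j * b i =
        a i * ((u : R) * a j + b j) - a j * ((u : R) * a i + b i) := by ring
    rw [this]
    exact sub_mem (Ideal.mul_mem_left _ _ (hmem j)) (Ideal.mul_mem_left _ _ (hmem i))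
  rw [h] at this
  exact hm.ne_top (top_le_iff.mp this)
end

section
/- Let $K$ be a number field and $S$ a finite set of finite places of $K$ such that the unit group $O_S^\times$ of the ring of $S$-integers $O_S$ is infinite. Let $n \geq 1$ and let $a, b : \mathrm{Fin}(n+1) \to O_S$ be vectors that are linearly independent over $K$ when viewed in $K^{n+1}$, such that the ideal of $O_S$ generated by the coordinates $a_i$ is the unit ideal, the ideal generated by the coordinates $b_i$ is the unit ideal, and the ideal generated by all minors $a_i b_j - a_j b_i$ is the unit ideal. Then: (1) the map sending $u \in O_S^\times$ to the point of $\mathbb{P}^n(K)$ with homogeneous coordinates $(u a_0 + b_0, \dots, u a_n + b_n)$ is injective, so the set of such points is infinite; and (2) for every $u \in O_S^\times$, writing $P_i = u a_i + b_i$, each of the following is the unit ideal of $O_S$: the ideal generated by $\{P_i\}$, the ideal generated by $\{P_i a_j - P_j a_i\}$, and the ideal generated by $\{P_i b_j - P_j b_i\}$. -/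
open NumberField IsDedekindDomain

set_option maxHeartbeats 1000000

/-- (Arithmetic content of Beukers' Lemma.)  Let `K` be a number field and `S`
a finite set of finite places such that the unit group of the ring of `S`-integers `O_S` is
infinite.  Let `a, b : Fin (n+1) → O_S` be vectors, linearly independent over `K`, whose
coordinates each generate the unit ideal and whose `2 × 2` minors generate the unit ideal.
Then (1) distinct units `u` give projectively distinct points `[u·a + b] ∈ ℙⁿ(K)` — i.e. if the
coordinate vectors of `u` and `u'` are proportional then `u = u'` — so the set of such points is
infinite; and (2) for each unit `u`, writing `Pᵢ = u aᵢ + bᵢ`, the ideals generated by the `Pᵢ`,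
by the minors `Pᵢ aⱼ - Pⱼ aᵢ`, and by the minors `Pᵢ bⱼ - Pⱼ bᵢ` are all the unit ideal of
`O_S`. -/
theorem beukers_lemma_arithmetic
    (K : Type*) [Field K] [NumberField K] (S : Finset (HeightOneSpectrum (𝓞 K)))
    (hinf : Infinite (((S : Set (HeightOneSpectrum (𝓞 K))).integer K))ˣ)
    (n : ℕ) (hn : 1 ≤ n)
    (a b : Fin (n + 1) → ((S : Set (HeightOneSpectrum (𝓞 K))).integer K))
    (hab : LinearIndependent K ![fun i => (a i : K), fun i => (b i : K)])
    (ha : Ideal.span (Set.range a) = ⊤)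
    (hb : Ideal.span (Set.range b) = ⊤)
    (hminors : Ideal.span {x : ((S : Set (HeightOneSpectrum (𝓞 K))).integer K) |
      ∃ i j, x = a i * b j - a j * b i} = ⊤) :
    (∀ u u' : (((S : Set (HeightOneSpectrum (𝓞 K))).integer K))ˣ,
      (∃ c : Kˣ, ∀ i,
        (((u' : ((S : Set (HeightOneSpectrum (𝓞 K))).integer K)) * a i + b i : _) : K) =
          (c : K) * (((u : ((S : Set (HeightOneSpectrum (𝓞 K))).integer K)) * a i + b i : _) : K)) →
      u = u') ∧
    Set.Infinite (Set.range fun u : (((S : Set (HeightOneSpectrum (𝓞 K))).integer K))ˣ =>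
      fun i : Fin (n + 1) =>
        (((u : ((S : Set (HeightOneSpectrum (𝓞 K))).integer K)) * a i + b i : _) : K)) ∧
    (∀ u : (((S : Set (HeightOneSpectrum (𝓞 K))).integer K))ˣ,
      Ideal.span (Set.range fun i => (u : _) * a i + b i) = ⊤ ∧
      Ideal.span {x : ((S : Set (HeightOneSpectrum (𝓞 K))).integer K) | ∃ i j,
        x = ((u : _) * a i + b i) * a j - ((u : _) * a j + b j) * a i} = ⊤ ∧
      Ideal.span {x : ((S : Set (HeightOneSpectrum (𝓞 K))).integer K) | ∃ i j,
        x = ((u : _) * a i + b i) * b j - ((u : _) * a j + b j) * b i} = ⊤) := by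

  classical
  haveI := hinf
  have key : ∀ u u' : (((S : Set (HeightOneSpectrum (𝓞 K))).integer K))ˣ,
      (∃ c : Kˣ, ∀ i,
        (((u' : ((S : Set (HeightOneSpectrum (𝓞 K))).integer K)) * a i + b i : _) : K) =
          (c : K) * (((u : ((S : Set (HeightOneSpectrum (𝓞 K))).integer K)) * a i + b i : _) : K)) →
      u = u' := by
    rintro u u' ⟨c, hc⟩
    have hc' : ∀ i, (((u' : ((S : Set (HeightOneSpectrum (𝓞 K))).integer K)) : K)) * (a i : K)
        + (b i : K) = (c : K) * (((u : ((S : Set (HeightOneSpectrum (𝓞 K))).integer K)) : K)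
        * (a i : K) + (b i : K)) := by
      intro i
      have h := hc i
      push_cast at h
      exact h
    have h2 := Fintype.linearIndependent_iff.mp hab
    have hsum : ∑ k : Fin 2,
        (![((u' : ((S : Set (HeightOneSpectrum (𝓞 K))).integer K)) : K)
            - (c : K) * ((u : ((S : Set (HeightOneSpectrum (𝓞 K))).integer K)) : K),
           1 - (c : K)] k) •
        (![fun i => ((a i : K)), fun i => ((b i : K))] k) = 0 := by
      funext i
      simp only [Fin.sum_univ_two, Matrix.cons_val_zero, Matrix.cons_val_one, Matrix.head_cons,
        Pi.add_apply, Pi.smul_apply, Pi.zero_apply, smul_eq_mul]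
      linear_combination hc' i
    have hz := h2 _ hsum
    have h0 := hz 0
    have h1 := hz 1
    simp only [Matrix.cons_val_zero, Matrix.cons_val_one, Matrix.head_cons] at h0 h1
    have hc1 : (c : K) = 1 := (sub_eq_zero.mp h1).symm
    have hu : ((u' : ((S : Set (HeightOneSpectrum (𝓞 K))).integer K)) : K)
        = ((u : ((S : Set (HeightOneSpectrum (𝓞 K))).integer K)) : K) := by
      have := sub_eq_zero.mp h0
      rw [hc1, one_mul] at this
      exact this
    exact (Units.ext (Subtype.coe_injective hu)).symm
  refine ⟨key, ?_, ?_⟩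
  · apply Set.infinite_range_of_injective
    intro u u' h
    exact key u u' ⟨1, fun i => by simpa using (congrFun h i).symm⟩
  · intro u
    refine ⟨?_, ?_, ?_⟩
    · rw [← top_le_iff, ← hminors, Ideal.span_le]
      rintro x ⟨i, j, rfl⟩
      have hx : a i * b j - a j * b i
          = a i * ((u : _) * a j + b j) - a j * ((u : _) * a i + b i) := by ring
      rw [hx]
      exact Ideal.sub_mem _
        (Ideal.mul_mem_left _ _ (Ideal.subset_span (Set.mem_range_self j)))
        (Ideal.mul_mem_left _ _ (Ideal.subset_span (Set.mem_range_self i)))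
    · have hset : {x : ((S : Set (HeightOneSpectrum (𝓞 K))).integer K) | ∃ i j,
          x = ((u : _) * a i + b i) * a j - ((u : _) * a j + b j) * a i}
          = {x : ((S : Set (HeightOneSpectrum (𝓞 K))).integer K) |
            ∃ i j, x = a i * b j - a j * b i} := by
        ext x
        constructor
        · rintro ⟨i, j, rfl⟩
          exact ⟨j, i, by ring⟩
        · rintro ⟨i, j, rfl⟩
          exact ⟨j, i, by ring⟩
      rw [hset, hminors]
    · rw [← top_le_iff, ← hminors, Ideal.span_le]
      rintro x ⟨i, j, rfl⟩
      have huu : ((u⁻¹ : _ˣ) : ((S : Set (HeightOneSpectrum (𝓞 K))).integer K)) * (u : _) = 1 :=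
        u.inv_mul
      have hx : a i * b j - a j * b i = ((u⁻¹ : _ˣ) : _) *
          (((u : _) * a i + b i) * b j - ((u : _) * a j + b j) * b i) := by
        linear_combination (a j * b i - a i * b j) * huu
      rw [hx]
      exact Ideal.mul_mem_left _ _ (Ideal.subset_span ⟨i, j, rfl⟩)
end
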